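/- In the setting of the tree OLS estimator with level-dependent weights ε_j, the root estimate is β_root = Z_root / E_h, where E_h = Σ_{j=0}^h f^j ε_j² and Z_root = Σ_{leaves u} Σ_{w ∈ anc(u)} ε_{h(w)}² Y_w. More generally, β_v = (Z_v − f^{h(v)} F_v)/E_{h(v)}, where Z_v = Σ_{leaves u ≺ v} Σ_{w ∈ anc(u)} ε_{h(w)}² Y_w, F_v = Σ_{w strict ancestor of v} ε_{h(w)}² β_w, and E_l = Σ_{j=0}^l f^j ε_j². -/

import Mathlib

open Finset

/-- A vector of node values on the complete tree of fanout `f` and height `h`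
(nodes at height `j` are indexed by `k < f^(h-j)`; the children of node
`(j+1, k)` are `(j, k·f + r)` for `r < f`) is consistent if the value of every
internal node is the sum of the values of its children. -/
def Consistent (f h : ℕ) (b : ℕ → ℕ → ℝ) : Prop :=
  ∀ j < h, ∀ k < f ^ (h - (j + 1)),
    b (j + 1) k = ∑ r ∈ Finset.range f, b j (k * f + r)

/-- The weighted least-squares objective `∑_v ε_{h(v)}²·(Y_v − b_v)²`. -/
def lsObjective (f h : ℕ) (ε : ℕ → ℝ) (Y b : ℕ → ℕ → ℝ) : ℝ :=
  ∑ j ∈ Finset.range (h + 1), ∑ k ∈ Finset.range (f ^ (h - j)),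
    ε j ^ 2 * (Y j k - b j k) ^ 2

/-- `Z_v = ∑_{leaves u ≺ v} ∑_{w ∈ anc(u)} ε_{h(w)}²·Y_w` for the node `v = (l, k)`. -/
def Zval (f h : ℕ) (ε : ℕ → ℝ) (Y : ℕ → ℕ → ℝ) (l k : ℕ) : ℝ :=
  ∑ u ∈ Finset.range (f ^ l), ∑ j ∈ Finset.range (h + 1),
    ε j ^ 2 * Y j ((k * f ^ l + u) / f ^ j)

/-- `F_v = ∑_{w strict ancestor of v} ε_{h(w)}²·β_w` for the node `v = (l, k)`. -/
def Fval (f h : ℕ) (ε : ℕ → ℝ) (β : ℕ → ℕ → ℝ) (l k : ℕ) : ℝ :=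
  ∑ j ∈ Finset.Icc (l + 1) h, ε j ^ 2 * β j (k / f ^ (j - l))

/-- `E_l = ∑_{j=0}^l f^j ε_j²`. -/
def Eval (f : ℕ) (ε : ℕ → ℝ) (l : ℕ) : ℝ :=
  ∑ j ∈ Finset.range (l + 1), (f : ℝ) ^ j * ε j ^ 2

/-!
Since `β` minimises a positive quadratic form on the subspace of consistent vectors, the weighted
residual `Y - β` is orthogonal to every consistent `d` (the objective along `β + t • d` is a
quadratic in `t` with minimum at `0`). The indicator of the ancestors of a leaf `u` is consistent,
so for each leaf `∑_{w ∈ anc(u)} ε_{h(w)}² Y_w = ∑_{w ∈ anc(u)} ε_{h(w)}² β_w`. Summing over the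
`f^l` leaves below `v = (l, k)` gives `Z_v` on the left; on the right, the height-`j` nodes of the
subtree of `v` are each met by `f^j` leaves and add up to `β_v` by consistency, contributing
`E_l β_v`, while every strict ancestor of `v` is met by all `f^l` leaves, contributing `f^l F_v`.
-/

lemma Nat.mul_add_div_of_lt {m u : ℕ} (k : ℕ) (hu : u < m) : (k * m + u) / m = k := by
  rw [Nat.mul_comm, Nat.mul_add_div (by omega), Nat.div_eq_of_lt hu, Nat.add_zero]

lemma Nat.mul_pow_add_lt_pow {f m n k u : ℕ} (hmn : m ≤ n) (hk : k < f ^ (n - m))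
    (hu : u < f ^ m) : k * f ^ m + u < f ^ n := by
  have := Nat.mul_add_lt_mul_of_lt_of_lt hk hu
  rwa [Nat.mul_comm (f ^ m), ← pow_add, Nat.sub_add_cancel hmn] at this

lemma Nat.mul_pow_add_div_pow {f l j : ℕ} (hlj : l ≤ j) (k : ℕ) {u : ℕ}
    (hu : u < f ^ l) : (k * f ^ l + u) / f ^ j = k / f ^ (j - l) := by
  rw [← Nat.add_sub_cancel' hlj, pow_add, ← Nat.div_div_eq_div_mul, Nat.mul_add_div_of_lt k hu,
    Nat.add_sub_cancel_left]

lemma Finset.sum_range_mul_eq_sum_sum {M : Type*} [AddCommMonoid M] (g : ℕ → M) (a b : ℕ) :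
    ∑ i ∈ range (a * b), g i = ∑ r ∈ range a, ∑ u ∈ range b, g (r * b + u) := by
  induction a with
  | zero => simp
  | succ a ih => rw [Nat.succ_mul, sum_range_add, ih, sum_range_succ]

lemma Finset.sum_range_ite_eq_mul_add {M : Type*} [AddCommMonoid M] {f : ℕ} (hf : 0 < f)
    (n k : ℕ) (c : M) :
    ∑ r ∈ range f, (if n = k * f + r then c else 0) = if n / f = k then c else 0 := by
  have hiff : ∀ r ∈ range f, (n = k * f + r ↔ n / f = k ∧ n % f = r) := fun r hr => by
    rw [Nat.div_mod_unique hf, and_iff_left (mem_range.1 hr), eq_comm, Nat.mul_comm,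
      Nat.add_comm]
  rw [sum_congr rfl fun r hr => if_congr (hiff r hr) rfl rfl]
  simp only [ite_and]
  split_ifs <;> simp [Nat.mod_lt n hf]

section Tree

variable {f h : ℕ} {ε : ℕ → ℝ}

def treeInner (f h : ℕ) (ε : ℕ → ℝ) (a b : ℕ → ℕ → ℝ) : ℝ :=
  ∑ j ∈ range (h + 1), ∑ k ∈ range (f ^ (h - j)), ε j ^ 2 * a j k * b j k

lemma Consistent.add_smul {b d : ℕ → ℕ → ℝ} (hb : Consistent f h b) (hd : Consistent f h d)
    (t : ℝ) : Consistent f h (b + t • d) := by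
  intro j hj k hk
  simp only [Pi.add_apply, Pi.smul_apply, smul_eq_mul, hb j hj k hk, hd j hj k hk, mul_sum,
    sum_add_distrib]

lemma lsObjective_add_smul (Y b d : ℕ → ℕ → ℝ) (t : ℝ) :
    lsObjective f h ε Y (b + t • d) =
      lsObjective f h ε Y b - 2 * t * treeInner f h ε (Y - b) d + t ^ 2 * treeInner f h ε d d := by
  simp only [lsObjective, treeInner, mul_sum, ← sum_sub_distrib, ← sum_add_distrib]
  refine sum_congr rfl fun j _ => sum_congr rfl fun k _ => ?_
  simp only [Pi.add_apply, Pi.sub_apply, Pi.smul_apply, smul_eq_mul]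
  ring

lemma treeInner_sub_eq_zero_of_minimizes {Y β d : ℕ → ℕ → ℝ} (hβ : Consistent f h β)
    (hmin : ∀ b : ℕ → ℕ → ℝ, Consistent f h b → lsObjective f h ε Y β ≤ lsObjective f h ε Y b)
    (hd : Consistent f h d) : treeInner f h ε (Y - β) d = 0 := by
  set C := treeInner f h ε (Y - β) d
  have hquad : ∀ t : ℝ, 0 ≤ treeInner f h ε d d * (t * t) + (-2 * C) * t + 0 := fun t => by
    have := hmin _ (hβ.add_smul hd t)
    rw [lsObjective_add_smul] at this
    linarith
  have := discrim_le_zero hquad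
  rw [discrim] at this
  nlinarith [sq_nonneg C]

-- The height-`j` ancestor of the leaf `u` is `u / f ^ j`.
def leafPath (f u : ℕ) : ℕ → ℕ → ℝ := fun j k => if u / f ^ j = k then 1 else 0

lemma consistent_leafPath (hf : 0 < f) (h u : ℕ) : Consistent f h (leafPath f u) := by
  intro j _ k _
  simp only [leafPath, sum_range_ite_eq_mul_add hf, pow_succ, Nat.div_div_eq_div_mul]

lemma treeInner_leafPath (hf : 0 < f) {u : ℕ} (hu : u < f ^ h) (a : ℕ → ℕ → ℝ) :
    treeInner f h ε a (leafPath f u) = ∑ j ∈ range (h + 1), ε j ^ 2 * a j (u / f ^ j) := by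
  refine sum_congr rfl fun j hj => ?_
  have hmem : u / f ^ j ∈ range (f ^ (h - j)) := by
    rwa [mem_range, Nat.div_lt_iff_lt_mul (pow_pos hf j), ← pow_add,
      Nat.sub_add_cancel (Nat.lt_succ_iff.1 (mem_range.1 hj))]
  simp only [leafPath, mul_ite, mul_one, mul_zero, sum_ite_eq, hmem, if_true]

lemma Consistent.sum_subtree {β : ℕ → ℕ → ℝ} (hβ : Consistent f h β) {j l k : ℕ}
    (hjl : j ≤ l) (hl : l ≤ h) (hk : k < f ^ (h - l)) :
    ∑ u ∈ range (f ^ l), β j ((k * f ^ l + u) / f ^ j) = f ^ j * β l k := by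
  induction l, hjl using Nat.le_induction generalizing k with
  | base =>
    rw [sum_congr rfl fun u hu => congrArg (β j) (Nat.mul_add_div_of_lt k (mem_range.1 hu)),
      sum_const, card_range, nsmul_eq_mul, Nat.cast_pow]
  | succ l hjl ih =>
    have hchild : ∀ r ∈ range f, ∑ u ∈ range (f ^ l), β j (((k * f + r) * f ^ l + u) / f ^ j) =
        f ^ j * β l (k * f + r) := fun r hr => by
      refine ih (by omega) ?_
      simpa using Nat.mul_pow_add_lt_pow (m := 1) (n := h - l) (by omega) (by rwa [Nat.sub_sub])
        (by simpa using mem_range.1 hr)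
    calc ∑ u ∈ range (f ^ (l + 1)), β j ((k * f ^ (l + 1) + u) / f ^ j)
        = ∑ r ∈ range f, ∑ u ∈ range (f ^ l), β j (((k * f + r) * f ^ l + u) / f ^ j) := by
          rw [pow_succ', sum_range_mul_eq_sum_sum]
          refine sum_congr rfl fun r _ => sum_congr rfl fun u _ => ?_
          rw [show k * (f * f ^ l) + (r * f ^ l + u) = (k * f + r) * f ^ l + u by ring]
      _ = f ^ j * β (l + 1) k := by
          rw [sum_congr rfl hchild, ← mul_sum, hβ l (by omega) k hk]

lemma Consistent.sum_subtree_paths {β : ℕ → ℕ → ℝ} (hβ : Consistent f h β) {l k : ℕ}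
    (hl : l ≤ h) (hk : k < f ^ (h - l)) :
    ∑ u ∈ range (f ^ l), ∑ j ∈ range (h + 1), ε j ^ 2 * β j ((k * f ^ l + u) / f ^ j) =
      Eval f ε l * β l k + f ^ l * Fval f h ε β l k := by
  rw [sum_comm, ← sum_range_add_sum_Ico _ (by omega : l + 1 ≤ h + 1),
    Ico_add_one_right_eq_Icc, Eval, Fval, sum_mul, mul_sum]
  congr 1
  · refine sum_congr rfl fun j hj => ?_
    rw [← mul_sum, hβ.sum_subtree (Nat.lt_succ_iff.1 (mem_range.1 hj)) hl hk]
    ring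
  · refine sum_congr rfl fun j hj => ?_
    rw [mem_Icc] at hj
    rw [sum_congr rfl fun u hu => by rw [Nat.mul_pow_add_div_pow (by omega) k (mem_range.1 hu)],
      sum_const, card_range, nsmul_eq_mul]
    push_cast
    ring

lemma Eval_pos (h0 : ε 0 ≠ 0) (l : ℕ) : 0 < Eval f ε l :=
  sum_pos' (fun j _ => by positivity) ⟨0, by simp, by rw [pow_zero, one_mul]; positivity⟩

end Tree

/-- Closed forms for the tree OLS estimator: the root estimate is
`β_root = Z_root / E_h`, and more generally
`β_v = (Z_v − f^{h(v)}·F_v) / E_{h(v)}` for every node `v = (l, k)`. -/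
theorem ols_closed_form (f h : ℕ) (hf : 2 ≤ f) (ε : ℕ → ℝ) (hε : ∀ j, 0 < ε j)
    (Y β : ℕ → ℕ → ℝ)
    (hcons : Consistent f h β)
    (hmin : ∀ b : ℕ → ℕ → ℝ, Consistent f h b →
      lsObjective f h ε Y β ≤ lsObjective f h ε Y b) :
    β h 0 = Zval f h ε Y h 0 / Eval f ε h ∧
    ∀ l ≤ h, ∀ k < f ^ (h - l),
      β l k = (Zval f h ε Y l k - (f : ℝ) ^ l * Fval f h ε β l k) / Eval f ε l := by
  have hf0 : 0 < f := by omega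
  have closed : ∀ l ≤ h, ∀ k < f ^ (h - l),
      β l k = (Zval f h ε Y l k - (f : ℝ) ^ l * Fval f h ε β l k) / Eval f ε l := by
    intro l hl k hk
    have hleaf : ∀ u ∈ range (f ^ l), ∑ j ∈ range (h + 1), ε j ^ 2 * Y j ((k * f ^ l + u) / f ^ j) =
        ∑ j ∈ range (h + 1), ε j ^ 2 * β j ((k * f ^ l + u) / f ^ j) := fun u hu => by
      have := treeInner_sub_eq_zero_of_minimizes hcons hmin
        (consistent_leafPath hf0 h (k * f ^ l + u))
      rw [treeInner_leafPath hf0 (Nat.mul_pow_add_lt_pow hl hk (mem_range.1 hu))] at this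
      simpa [mul_sub, sum_sub_distrib, sub_eq_zero] using this
    have hZ : Zval f h ε Y l k = Eval f ε l * β l k + f ^ l * Fval f h ε β l k := by
      rw [Zval, sum_congr rfl hleaf, hcons.sum_subtree_paths hl hk]
    rw [eq_div_iff (Eval_pos (hε 0).ne' l).ne', hZ]
    ring
  refine ⟨?_, closed⟩
  simpa [Fval] using closed h le_rfl 0 (by simp)
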